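/- arXiv:2309.11588 — 4 statements merged into one kernel-verified Lean document; each statement's English description precedes it below -/
import Mathlib

section
/- Consider the networked SEIRS model with travel flows on n subpopulations. Suppose the flow balance assumption holds (γ_i = Σ_{j≠i} Φ_{ij} for every i), all parameters α_i, β_i, σ_i, δ_i are strictly positive, and the initial conditions satisfy s_i(0), e_i(0), x_i(0), r_i(0) ∈ [0,1] with s_i(0)+e_i(0)+x_i(0)+r_i(0) = 1 for every i. Then for every differentiable solution (s(t), e(t), x(t), r(t)) of the dynamics and every t ≥ 0 and every i, one has s_i(t), e_i(t), x_i(t), r_i(t) ∈ [0,1] and s_i(t)+e_i(t)+x_i(t)+r_i(t) = 1. -/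
open Finset Set Filter Topology

/-!
Nonnegativity. For a state `y` with `y(0) ≥ 0`, the sum `V = ∑ᵢ (min yᵢ 0)²` of squared negative
parts is differentiable with `V' = ∑ᵢ 2 (min yᵢ 0) yᵢ'`. Only components with `yᵢ < 0` contribute,
and for those every SEIRS right-hand side is at least `-Lᵢ g`, where `g = ∑ⱼ |min yⱼ 0|`: the
travel terms lose at most `γᵢ g` by flow balance, and the bilinear term `β x s` loses at most
`β M g`, with `M` a bound for the solution on the compact interval `[0, T]`. Since
`g² ≤ (card) V`, this gives `V' ≤ K V`, and Grönwall's inequality with `V(0) = 0` yields `V ≡ 0`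
on `[0, T]`.

Conservation. `vᵢ = sᵢ + eᵢ + xᵢ + rᵢ - 1` solves the linear flow system
`vᵢ' = -γᵢ vᵢ + ∑_{j ≠ i} Φᵢⱼ vⱼ` (the infection, incubation, healing and immunity-loss terms
cancel, and `∑ⱼ Φᵢⱼ = γᵢ`). This system is quasi-positive, so `v ≥ 0` and `-v ≥ 0`, i.e. `v ≡ 0`;
together with nonnegativity this gives the upper bounds `≤ 1`.
-/

theorem hasDerivAt_min_zero_sq (u : ℝ) : HasDerivAt (fun v : ℝ => min v 0 ^ 2) (2 * min u 0) u := by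
  rcases lt_trichotomy u 0 with hu | rfl | hu
  · have hev : (fun v : ℝ => min v 0 ^ 2) =ᶠ[𝓝 u] fun v => v ^ 2 := by
      filter_upwards [Iio_mem_nhds hu] with v hv
      rw [min_eq_left hv.le]
    simpa [min_eq_left hu.le] using (hasDerivAt_pow 2 u).congr_of_eventuallyEq hev
  · have hle : HasDerivWithinAt (fun v : ℝ => min v 0 ^ 2) 0 (Iic 0) 0 := by
      have := ((hasDerivAt_pow 2 (0 : ℝ)).hasDerivWithinAt (s := Iic 0)).congr
        (f₁ := fun v : ℝ => min v 0 ^ 2) (fun v hv => by rw [min_eq_left hv]) (by simp)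
      simpa using this
    have hge : HasDerivWithinAt (fun v : ℝ => min v 0 ^ 2) 0 (Ici 0) 0 :=
      (hasDerivWithinAt_const _ _ 0).congr (fun v hv => by simp [min_eq_right (mem_Ici.1 hv)])
        (by simp)
    simpa [Iic_union_Ici] using hle.union hge
  · have hev : (fun v : ℝ => min v 0 ^ 2) =ᶠ[𝓝 u] fun _ => 0 := by
      filter_upwards [Ioi_mem_nhds hu] with v hv
      simp [min_eq_right (le_of_lt (mem_Ioi.1 hv))]
    simpa [min_eq_right hu.le] using (hasDerivAt_const u (0 : ℝ)).congr_of_eventuallyEq hev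

theorem HasDerivAt.min_zero_sq {f : ℝ → ℝ} {f' t : ℝ} (hf : HasDerivAt f f' t) :
    HasDerivAt (fun τ => min (f τ) 0 ^ 2) (2 * min (f t) 0 * f') t :=
  (hasDerivAt_min_zero_sq (f t)).comp t hf

theorem le_zero_of_hasDerivAt_le_mul {V V' : ℝ → ℝ} {a b K : ℝ}
    (hV : ∀ t ∈ Icc a b, HasDerivAt V (V' t) t) (hV' : ∀ t ∈ Ico a b, V' t ≤ K * V t)
    (ha : V a ≤ 0) : ∀ t ∈ Icc a b, V t ≤ 0 := by
  intro t ht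
  have := le_gronwallBound_of_liminf_deriv_right_le (δ := 0) (ε := 0)
    (fun τ hτ => (hV τ hτ).continuousAt.continuousWithinAt)
    (fun τ hτ r hr => (hV τ (Ico_subset_Icc_self hτ)).hasDerivWithinAt.liminf_right_slope_le hr)
    ha (fun τ hτ => by simpa using hV' τ hτ) t ht
  rwa [gronwallBound_ε0_δ0] at this

theorem neg_mul_le_mul_of_abs_le {a b g C : ℝ} (hg : 0 ≤ g) (ha : -g ≤ a) (hb : -g ≤ b)
    (haC : |a| ≤ C) (hbC : |b| ≤ C) : -(C * g) ≤ a * b := by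
  have ha' := le_of_abs_le haC
  have hb' := le_of_abs_le hbC
  rcases le_total 0 a with ha0 | ha0 <;> rcases le_total 0 b with hb0 | hb0
  · nlinarith [abs_nonneg a]
  · nlinarith [abs_nonneg a]
  · nlinarith [abs_nonneg b]
  · nlinarith [abs_nonneg a]

section

variable {ι : Type*} [Fintype ι]

theorem nonneg_of_hasDerivAt_of_quasiPositive {y d : ℝ → ι → ℝ} {T : ℝ} {L : ι → ℝ}
    (hy : ∀ t ∈ Icc 0 T, ∀ i, HasDerivAt (fun τ => y τ i) (d t i) t)
    (hd : ∀ t ∈ Icc 0 T, ∀ g, 0 ≤ g → (∀ j, -g ≤ y t j) → ∀ i, y t i < 0 → -(L i * g) ≤ d t i)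
    (h0 : ∀ i, 0 ≤ y 0 i) : ∀ t ∈ Icc 0 T, ∀ i, 0 ≤ y t i := by
  set V : ℝ → ℝ := fun t => ∑ i, min (y t i) 0 ^ 2 with hV_def
  set g : ℝ → ℝ := fun t => ∑ i, -min (y t i) 0
  set A : ℝ := ∑ j, |L j|
  have hV : ∀ t ∈ Icc 0 T, HasDerivAt V (∑ i, 2 * min (y t i) 0 * d t i) t := fun t ht =>
    HasDerivAt.fun_sum fun i _ => (hy t ht i).min_zero_sq
  have hg : ∀ t, 0 ≤ g t := fun t => sum_nonneg fun i _ => by simp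
  have hgy : ∀ t j, -g t ≤ y t j := fun t j => by
    have := single_le_sum (f := fun i => -min (y t i) 0) (fun i _ => by simp) (mem_univ j)
    linarith [min_le_left (y t j) 0]
  have hLA : ∀ i, L i ≤ A := fun i => (le_abs_self _).trans
    (single_le_sum (f := fun j => |L j|) (fun j _ => abs_nonneg _) (mem_univ i))
  have hterm : ∀ t ∈ Icc 0 T, ∀ i, 2 * min (y t i) 0 * d t i ≤ 2 * A * g t * -min (y t i) 0 := by
    intro t ht i
    rcases lt_or_ge (y t i) 0 with hneg | hpos
    · have hdi := hd t ht (g t) (hg t) (hgy t) i hneg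
      rw [min_eq_left hneg.le]
      nlinarith [mul_nonneg (by linarith : 0 ≤ d t i + L i * g t) (by linarith : 0 ≤ -y t i),
        mul_nonneg (mul_nonneg (sub_nonneg.2 (hLA i)) (hg t)) (by linarith : 0 ≤ -y t i)]
    · simp [min_eq_right hpos]
  have hV' : ∀ t ∈ Icc 0 T, ∑ i, 2 * min (y t i) 0 * d t i ≤ 2 * A * Fintype.card ι * V t := by
    intro t ht
    calc ∑ i, 2 * min (y t i) 0 * d t i ≤ ∑ i, 2 * A * g t * -min (y t i) 0 :=
          sum_le_sum fun i _ => hterm t ht i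
      _ = 2 * A * g t ^ 2 := by rw [← mul_sum, sq, mul_assoc]
      _ ≤ 2 * A * (Fintype.card ι * V t) := by
          gcongr
          convert sq_sum_le_card_mul_sum_sq (s := univ) (f := fun i => -min (y t i) 0) using 2
            <;> simp [hV_def]
      _ = _ := by ring
  have hV0 := le_zero_of_hasDerivAt_le_mul hV (fun t ht => hV' t (Ico_subset_Icc_self ht))
    (by simp [hV_def, min_eq_right (h0 _)])
  intro t ht i
  have hi : min (y t i) 0 ^ 2 ≤ 0 :=
    (single_le_sum (f := fun i => min (y t i) 0 ^ 2) (fun i _ => sq_nonneg _) (mem_univ i)).trans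
      (hV0 t ht)
  exact min_eq_right_iff.1 (pow_eq_zero_iff two_ne_zero |>.1 (le_antisymm hi (sq_nonneg _)))

variable [DecidableEq ι]

def inflow (Φ : ι → ι → ℝ) (f : ι → ℝ) (i : ι) : ℝ := ∑ j ∈ univ.erase i, Φ i j * f j

theorem neg_mul_le_inflow {Φ : ι → ι → ℝ} {γ : ι → ℝ} (hΦ : ∀ i j, 0 ≤ Φ i j)
    (hbal : ∀ i, γ i = ∑ j ∈ univ.erase i, Φ i j) {f : ι → ℝ} {g : ℝ} (hf : ∀ j, -g ≤ f j)
    (i : ι) : -(γ i * g) ≤ inflow Φ f i := by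
  rw [hbal, sum_mul, ← sum_neg_distrib]
  exact sum_le_sum fun j _ => by nlinarith [mul_le_mul_of_nonneg_left (hf j) (hΦ i j)]

theorem nonneg_of_hasDerivAt_inflow {Φ : ι → ι → ℝ} {γ : ι → ℝ} (hΦ : ∀ i j, 0 ≤ Φ i j)
    (hbal : ∀ i, γ i = ∑ j ∈ univ.erase i, Φ i j) {v : ℝ → ι → ℝ}
    (hv : ∀ t ≥ 0, ∀ i, HasDerivAt (fun τ => v τ i) (-(γ i * v t i) + inflow Φ (v t) i) t)
    (h0 : ∀ i, 0 ≤ v 0 i) : ∀ t ≥ 0, ∀ i, 0 ≤ v t i := by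
  have hγ : ∀ i, 0 ≤ γ i := fun i => hbal i ▸ sum_nonneg fun j _ => hΦ i j
  intro T hT
  refine nonneg_of_hasDerivAt_of_quasiPositive (L := γ) (fun t ht => hv t ht.1) ?_ h0 T ⟨hT, le_rfl⟩
  intro t _ g _ hg i hi
  nlinarith [neg_mul_le_inflow hΦ hbal hg i, mul_nonneg (hγ i) (neg_nonneg.2 hi.le)]

theorem eq_zero_of_hasDerivAt_inflow {Φ : ι → ι → ℝ} {γ : ι → ℝ} (hΦ : ∀ i j, 0 ≤ Φ i j)
    (hbal : ∀ i, γ i = ∑ j ∈ univ.erase i, Φ i j) {v : ℝ → ι → ℝ}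
    (hv : ∀ t ≥ 0, ∀ i, HasDerivAt (fun τ => v τ i) (-(γ i * v t i) + inflow Φ (v t) i) t)
    (h0 : ∀ i, v 0 i = 0) : ∀ t ≥ 0, ∀ i, v t i = 0 := by
  have hneg : ∀ t ≥ 0, ∀ i,
      HasDerivAt (fun τ => -v τ i) (-(γ i * -v t i) + inflow Φ (-v t) i) t := fun t ht i =>
    (hv t ht i).neg.congr_deriv (by simp [inflow, sum_neg_distrib]; ring)
  intro t ht i
  have h₁ := nonneg_of_hasDerivAt_inflow hΦ hbal hv (fun i => (h0 i).ge) t ht i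
  have h₂ := nonneg_of_hasDerivAt_inflow hΦ hbal (v := -v) hneg (fun i => by simp [h0]) t ht i
  simp only [Pi.neg_apply, neg_nonneg] at h₂
  exact le_antisymm h₂ h₁

structure IsSEIRSSolution (α β σ δ γ : ι → ℝ) (Φ : ι → ι → ℝ) (s e x r : ℝ → ι → ℝ) : Prop where
  hasDerivAt_s : ∀ t ≥ (0 : ℝ), ∀ i, HasDerivAt (fun τ => s τ i)
    (α i * r t i - (β i * x t i + γ i) * s t i + inflow Φ (s t) i) t
  hasDerivAt_e : ∀ t ≥ (0 : ℝ), ∀ i, HasDerivAt (fun τ => e τ i)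
    (β i * x t i * s t i - (σ i + γ i) * e t i + inflow Φ (e t) i) t
  hasDerivAt_x : ∀ t ≥ (0 : ℝ), ∀ i, HasDerivAt (fun τ => x τ i)
    (σ i * e t i - (δ i + γ i) * x t i + inflow Φ (x t) i) t
  hasDerivAt_r : ∀ t ≥ (0 : ℝ), ∀ i, HasDerivAt (fun τ => r τ i)
    (δ i * x t i - (α i + γ i) * r t i + inflow Φ (r t) i) t

variable {α β σ δ γ : ι → ℝ} {Φ : ι → ι → ℝ} {s e x r : ℝ → ι → ℝ}

theorem IsSEIRSSolution.sum_eq_one (hsol : IsSEIRSSolution α β σ δ γ Φ s e x r)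
    (hΦ : ∀ i j, 0 ≤ Φ i j) (hbal : ∀ i, γ i = ∑ j ∈ univ.erase i, Φ i j)
    (h0 : ∀ i, s 0 i + e 0 i + x 0 i + r 0 i = 1) :
    ∀ t ≥ 0, ∀ i, s t i + e t i + x t i + r t i = 1 := by
  set v : ℝ → ι → ℝ := fun t i => s t i + e t i + x t i + r t i - 1
  have hinflow : ∀ t i, inflow Φ (v t) i
      = inflow Φ (s t) i + inflow Φ (e t) i + inflow Φ (x t) i + inflow Φ (r t) i - γ i := by
    intro t i
    simp only [v, inflow, hbal i, mul_sub, mul_add, mul_one, sum_sub_distrib, sum_add_distrib]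
  have hv : ∀ t ≥ 0, ∀ i, HasDerivAt (fun τ => v τ i) (-(γ i * v t i) + inflow Φ (v t) i) t :=
    fun t ht i => ((((hsol.hasDerivAt_s t ht i).add (hsol.hasDerivAt_e t ht i)).add
      (hsol.hasDerivAt_x t ht i)).add (hsol.hasDerivAt_r t ht i)).sub_const 1
      |>.congr_deriv (by rw [hinflow]; ring)
  intro t ht i
  linarith [eq_zero_of_hasDerivAt_inflow hΦ hbal hv (fun i => by simp [v, h0]) t ht i]

theorem seirs_rhs_lower_bounds (hα : ∀ i, 0 ≤ α i) (hβ : ∀ i, 0 ≤ β i) (hσ : ∀ i, 0 ≤ σ i)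
    (hδ : ∀ i, 0 ≤ δ i) (hΦ : ∀ i j, 0 ≤ Φ i j) (hbal : ∀ i, γ i = ∑ j ∈ univ.erase i, Φ i j)
    {S E X R : ι → ℝ} {g C : ℝ} (hg : 0 ≤ g) (hS : ∀ j, -g ≤ S j) (hE : ∀ j, -g ≤ E j)
    (hX : ∀ j, -g ≤ X j) (hR : ∀ j, -g ≤ R j) (i : ι) (hSC : |S i| ≤ C) (hXC : |X i| ≤ C) :
    (S i < 0 → -((α i + β i * C + γ i) * g) ≤
      α i * R i - (β i * X i + γ i) * S i + inflow Φ S i) ∧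
    (E i < 0 → -((β i * C + γ i) * g) ≤ β i * X i * S i - (σ i + γ i) * E i + inflow Φ E i) ∧
    (X i < 0 → -((σ i + γ i) * g) ≤ σ i * E i - (δ i + γ i) * X i + inflow Φ X i) ∧
    (R i < 0 → -((δ i + γ i) * g) ≤ δ i * X i - (α i + γ i) * R i + inflow Φ R i) := by
  have hγ : 0 ≤ γ i := hbal i ▸ sum_nonneg fun j _ => hΦ i j
  have hXS : -(C * g) ≤ X i * S i :=
    neg_mul_le_mul_of_abs_le hg (hX i) (hS i) hXC hSC
  refine ⟨fun hneg => ?_, fun hneg => ?_, fun hneg => ?_, fun hneg => ?_⟩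
  · have hXS' : -(C * g) ≤ X i * -S i :=
      neg_mul_le_mul_of_abs_le hg (hX i) (by linarith) hXC (by rwa [abs_neg])
    nlinarith [neg_mul_le_inflow hΦ hbal hS i, mul_le_mul_of_nonneg_left (hR i) (hα i),
      mul_le_mul_of_nonneg_left hXS' (hβ i), mul_nonneg hγ (neg_nonneg.2 hneg.le)]
  · nlinarith [neg_mul_le_inflow hΦ hbal hE i, mul_le_mul_of_nonneg_left hXS (hβ i),
      mul_nonneg (add_nonneg (hσ i) hγ) (neg_nonneg.2 hneg.le)]
  · nlinarith [neg_mul_le_inflow hΦ hbal hX i, mul_le_mul_of_nonneg_left (hE i) (hσ i),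
      mul_nonneg (add_nonneg (hδ i) hγ) (neg_nonneg.2 hneg.le)]
  · nlinarith [neg_mul_le_inflow hΦ hbal hR i, mul_le_mul_of_nonneg_left (hX i) (hδ i),
      mul_nonneg (add_nonneg (hα i) hγ) (neg_nonneg.2 hneg.le)]

theorem IsSEIRSSolution.nonneg (hsol : IsSEIRSSolution α β σ δ γ Φ s e x r)
    (hα : ∀ i, 0 ≤ α i) (hβ : ∀ i, 0 ≤ β i) (hσ : ∀ i, 0 ≤ σ i) (hδ : ∀ i, 0 ≤ δ i)
    (hΦ : ∀ i j, 0 ≤ Φ i j) (hbal : ∀ i, γ i = ∑ j ∈ univ.erase i, Φ i j)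
    (hs0 : ∀ i, 0 ≤ s 0 i) (he0 : ∀ i, 0 ≤ e 0 i) (hx0 : ∀ i, 0 ≤ x 0 i) (hr0 : ∀ i, 0 ≤ r 0 i) :
    ∀ t ≥ 0, ∀ i, 0 ≤ s t i ∧ 0 ≤ e t i ∧ 0 ≤ x t i ∧ 0 ≤ r t i := by
  intro T hT i
  let y : ℝ → Fin 4 × ι → ℝ := fun t p => ![s t p.2, e t p.2, x t p.2, r t p.2] p.1
  let d : ℝ → Fin 4 × ι → ℝ := fun t p =>
    ![α p.2 * r t p.2 - (β p.2 * x t p.2 + γ p.2) * s t p.2 + inflow Φ (s t) p.2,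
      β p.2 * x t p.2 * s t p.2 - (σ p.2 + γ p.2) * e t p.2 + inflow Φ (e t) p.2,
      σ p.2 * e t p.2 - (δ p.2 + γ p.2) * x t p.2 + inflow Φ (x t) p.2,
      δ p.2 * x t p.2 - (α p.2 + γ p.2) * r t p.2 + inflow Φ (r t) p.2] p.1
  have hy : ∀ t ≥ 0, ∀ p, HasDerivAt (fun τ => y τ p) (d t p) t := by
    rintro t ht ⟨k, j⟩
    fin_cases k
    exacts [hsol.hasDerivAt_s t ht j, hsol.hasDerivAt_e t ht j, hsol.hasDerivAt_x t ht j,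
      hsol.hasDerivAt_r t ht j]
  obtain ⟨C, hC⟩ : ∃ C, ∀ t ∈ Icc 0 T, ‖y t‖ ≤ C :=
    isCompact_Icc.exists_bound_of_continuousOn fun t ht =>
      (continuousAt_pi.2 fun p => (hy t ht.1 p).continuousAt).continuousWithinAt
  have habs : ∀ t ∈ Icc 0 T, ∀ p, |y t p| ≤ C := fun t ht p =>
    (Real.norm_eq_abs _ ▸ norm_le_pi_norm (y t) p).trans (hC t ht)
  have key := nonneg_of_hasDerivAt_of_quasiPositive (y := y) (d := d)
    (L := fun p => ![α p.2 + β p.2 * C + γ p.2, β p.2 * C + γ p.2, σ p.2 + γ p.2,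
      δ p.2 + γ p.2] p.1) (fun t ht => hy t ht.1) ?bound ?init T ⟨hT, le_rfl⟩
  · exact ⟨key (0, i), key (1, i), key (2, i), key (3, i)⟩
  case bound =>
    rintro t ht g hg hgy ⟨k, j⟩ hneg
    have hbounds := seirs_rhs_lower_bounds hα hβ hσ hδ hΦ hbal hg (fun j => hgy (0, j))
      (fun j => hgy (1, j)) (fun j => hgy (2, j)) (fun j => hgy (3, j)) j (habs t ht (0, j))
      (habs t ht (2, j))
    fin_cases k
    exacts [hbounds.1 hneg, hbounds.2.1 hneg, hbounds.2.2.1 hneg, hbounds.2.2.2 hneg]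
  case init =>
    rintro ⟨k, j⟩
    fin_cases k
    exacts [hs0 j, he0 j, hx0 j, hr0 j]

end

theorem seirs_flows_well_defined_general
    {n : ℕ}
    (N α β σ δ γ : Fin n → ℝ) (w : Fin n → Fin n → ℝ)
    (hN : ∀ i, 0 < N i) (hα : ∀ i, 0 < α i) (hβ : ∀ i, 0 < β i)
    (hσ : ∀ i, 0 < σ i) (hδ : ∀ i, 0 < δ i) (hγ : ∀ i, 0 < γ i)
    (hwnn : ∀ i j, 0 ≤ w i j)
    (Φ : Fin n → Fin n → ℝ)
    (hΦ : ∀ i j, Φ i j = if i = j then 0 else (N j / N i) * w i j * γ j)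
    (hbal : ∀ i, γ i = ∑ j ∈ Finset.univ.erase i, Φ i j)
    (s e x r : ℝ → Fin n → ℝ)
    (hs0 : ∀ i, s 0 i ∈ Set.Icc (0 : ℝ) 1)
    (he0 : ∀ i, e 0 i ∈ Set.Icc (0 : ℝ) 1)
    (hx0 : ∀ i, x 0 i ∈ Set.Icc (0 : ℝ) 1)
    (hr0 : ∀ i, r 0 i ∈ Set.Icc (0 : ℝ) 1)
    (hsum0 : ∀ i, s 0 i + e 0 i + x 0 i + r 0 i = 1)
    (hds : ∀ t ≥ (0 : ℝ), ∀ i, HasDerivAt (fun τ => s τ i)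
      (α i * r t i - (β i * x t i + γ i) * s t i +
        ∑ j ∈ Finset.univ.erase i, Φ i j * s t j) t)
    (hde : ∀ t ≥ (0 : ℝ), ∀ i, HasDerivAt (fun τ => e τ i)
      (β i * x t i * s t i - (σ i + γ i) * e t i +
        ∑ j ∈ Finset.univ.erase i, Φ i j * e t j) t)
    (hdx : ∀ t ≥ (0 : ℝ), ∀ i, HasDerivAt (fun τ => x τ i)
      (σ i * e t i - (δ i + γ i) * x t i +
        ∑ j ∈ Finset.univ.erase i, Φ i j * x t j) t)
    (hdr : ∀ t ≥ (0 : ℝ), ∀ i, HasDerivAt (fun τ => r τ i)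
      (δ i * x t i - (α i + γ i) * r t i +
        ∑ j ∈ Finset.univ.erase i, Φ i j * r t j) t) :
    ∀ t ≥ (0 : ℝ), ∀ i,
      s t i ∈ Set.Icc (0 : ℝ) 1 ∧ e t i ∈ Set.Icc (0 : ℝ) 1 ∧
      x t i ∈ Set.Icc (0 : ℝ) 1 ∧ r t i ∈ Set.Icc (0 : ℝ) 1 ∧
      s t i + e t i + x t i + r t i = 1 := by
  have hΦnn : ∀ i j, 0 ≤ Φ i j := fun i j => by
    rw [hΦ]
    split_ifs
    exacts [le_rfl, mul_nonneg (mul_nonneg (div_nonneg (hN j).le (hN i).le) (hwnn i j)) (hγ j).le]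
  have hsol : IsSEIRSSolution α β σ δ γ Φ s e x r := ⟨hds, hde, hdx, hdr⟩
  have hsum := hsol.sum_eq_one hΦnn hbal hsum0
  have hnn := hsol.nonneg (fun i => (hα i).le) (fun i => (hβ i).le) (fun i => (hσ i).le)
    (fun i => (hδ i).le) hΦnn hbal (fun i => (hs0 i).1) (fun i => (he0 i).1) (fun i => (hx0 i).1)
    (fun i => (hr0 i).1)
  intro t ht i
  obtain ⟨hs, he, hx, hr⟩ := hnn t ht i
  have h1 := hsum t ht i
  exact ⟨⟨hs, by linarith⟩, ⟨he, by linarith⟩, ⟨hx, by linarith⟩, ⟨hr, by linarith⟩, h1⟩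

/-- **Lemma (well-definedness of the networked SEIRS model with travel flows).**
Under the flow-balance assumption and valid parameters/initial conditions, every
differentiable solution stays in `[0,1]` componentwise and sums to one at each node. -/
theorem seirs_flows_well_defined
    {n : ℕ} (hn : 1 ≤ n)
    (N α β σ δ γ : Fin n → ℝ) (w : Fin n → Fin n → ℝ)
    (hN : ∀ i, 0 < N i) (hα : ∀ i, 0 < α i) (hβ : ∀ i, 0 < β i)
    (hσ : ∀ i, 0 < σ i) (hδ : ∀ i, 0 < δ i) (hγ : ∀ i, 0 < γ i)
    (hwdiag : ∀ i, w i i = 0) (hwnn : ∀ i j, 0 ≤ w i j)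
    (hwsum : ∀ j, ∑ i ∈ Finset.univ.erase j, w i j = 1)
    (Φ : Fin n → Fin n → ℝ)
    (hΦ : ∀ i j, Φ i j = if i = j then 0 else (N j / N i) * w i j * γ j)
    (hbal : ∀ i, γ i = ∑ j ∈ Finset.univ.erase i, Φ i j)
    (s e x r : ℝ → Fin n → ℝ)
    (hs0 : ∀ i, s 0 i ∈ Set.Icc (0 : ℝ) 1)
    (he0 : ∀ i, e 0 i ∈ Set.Icc (0 : ℝ) 1)
    (hx0 : ∀ i, x 0 i ∈ Set.Icc (0 : ℝ) 1)
    (hr0 : ∀ i, r 0 i ∈ Set.Icc (0 : ℝ) 1)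
    (hsum0 : ∀ i, s 0 i + e 0 i + x 0 i + r 0 i = 1)
    (hds : ∀ t ≥ (0 : ℝ), ∀ i, HasDerivAt (fun τ => s τ i)
      (α i * r t i - (β i * x t i + γ i) * s t i +
        ∑ j ∈ Finset.univ.erase i, Φ i j * s t j) t)
    (hde : ∀ t ≥ (0 : ℝ), ∀ i, HasDerivAt (fun τ => e τ i)
      (β i * x t i * s t i - (σ i + γ i) * e t i +
        ∑ j ∈ Finset.univ.erase i, Φ i j * e t j) t)
    (hdx : ∀ t ≥ (0 : ℝ), ∀ i, HasDerivAt (fun τ => x τ i)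
      (σ i * e t i - (δ i + γ i) * x t i +
        ∑ j ∈ Finset.univ.erase i, Φ i j * x t j) t)
    (hdr : ∀ t ≥ (0 : ℝ), ∀ i, HasDerivAt (fun τ => r τ i)
      (δ i * x t i - (α i + γ i) * r t i +
        ∑ j ∈ Finset.univ.erase i, Φ i j * r t j) t) :
    ∀ t ≥ (0 : ℝ), ∀ i,
      s t i ∈ Set.Icc (0 : ℝ) 1 ∧ e t i ∈ Set.Icc (0 : ℝ) 1 ∧
      x t i ∈ Set.Icc (0 : ℝ) 1 ∧ r t i ∈ Set.Icc (0 : ℝ) 1 ∧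
      s t i + e t i + x t i + r t i = 1 :=
  seirs_flows_well_defined_general N α β σ δ γ w hN hα hβ hσ hδ hγ hwnn Φ hΦ hbal s e x r hs0 he0
    hx0 hr0 hsum0 hds hde hdx hdr
end

section
/- In the networked SEIRS model with travel flows, assume the flow balance condition γ_i = Σ_{j≠i} Φ_{ij} holds for every i and all parameters α_i, β_i, σ_i, δ_i, γ_i are strictly positive. If the spectral abscissa of the 2n×2n matrix U = [[−Σ−Γ+Φ, B],[Σ, −D−Γ+Φ]] satisfies s(U) < 0, then the spectral abscissa of the 3n×3n Jacobian J = [[−Σ−Γ+Φ, B, 0],[Σ, −D−Γ+Φ, 0],[0, D, −A−Γ+Φ]] of the (e,x,r)-dynamics at the healthy state satisfies s(J) < 0 (so the healthy state is locally exponentially stable). -/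
/-!
`J` is block lower triangular with diagonal blocks `U` and `V = -A - Γ + Φ`, so its spectrum is
that of `U` together with that of `V`. The off-diagonal entries of `V` are those of `Φ ≥ 0`, and
flow balance makes its row sums equal to `-αᵢ < 0`; Gershgorin's theorem then puts every
eigenvalue of `V` in the open left half-plane.
-/

open Finset Matrix

/-- The spectral abscissa of a real square matrix: the maximum real part of its
complex eigenvalues. -/
noncomputable def spectralAbscissa {m : Type*} [Fintype m] [DecidableEq m]
    (M : Matrix m m ℝ) : ℝ :=
  sSup (Complex.re '' spectrum ℂ (M.map Complex.ofReal))

/-- A square block matrix assembled from a `k × k` array of `n × n` blocks. -/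
def blockMat {k n : ℕ} (Bl : Fin k → Fin k → Matrix (Fin n) (Fin n) ℝ) :
    Matrix (Fin k × Fin n) (Fin k × Fin n) ℝ :=
  Matrix.of fun p q => Bl p.1 q.1 p.2 q.2

open Polynomial

namespace Matrix

variable {K m p : Type*} [Field K] [Fintype m] [DecidableEq m] [Fintype p] [DecidableEq p]

theorem spectrum_reindex (e : m ≃ p) (M : Matrix m m K) :
    spectrum K (reindex e e M) = spectrum K M := by
  ext z
  simp only [mem_spectrum_iff_isRoot_charpoly, charpoly_reindex]

theorem spectrum_fromBlocks_zero₁₂ (A : Matrix m m K) (C : Matrix p m K) (D : Matrix p p K) :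
    spectrum K (fromBlocks A 0 C D) = spectrum K A ∪ spectrum K D := by
  ext z
  simp only [mem_spectrum_iff_isRoot_charpoly, charpoly_fromBlocks_zero₁₂, IsRoot.def, eval_mul,
    mul_eq_zero, Set.mem_union]

theorem re_lt_of_mem_spectrum_of_rowSum_lt {M : Matrix m m ℝ}
    (hoff : ∀ i j, i ≠ j → 0 ≤ M i j) {r : ℝ} (hrow : ∀ i, ∑ j, M i j < r) {z : ℂ}
    (hz : z ∈ spectrum ℂ (M.map Complex.ofReal)) : z.re < r := by
  rw [← spectrum_toLin', ← Module.End.hasEigenvalue_iff_mem_spectrum] at hz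
  obtain ⟨k, hk⟩ := eigenvalue_mem_ball hz
  rw [Metric.mem_closedBall, Complex.dist_eq] at hk
  have hradius :
      ∑ j ∈ univ.erase k, ‖(M.map Complex.ofReal) k j‖ = ∑ j ∈ univ.erase k, M k j :=
    sum_congr rfl fun j hj => by
      rw [map_apply, Complex.norm_real, Real.norm_of_nonneg (hoff k j (ne_of_mem_erase hj).symm)]
  have hre : z.re - M k k ≤ ∑ j ∈ univ.erase k, M k j := by
    rw [← hradius, ← Complex.ofReal_re (M k k), ← Complex.sub_re]
    exact (Complex.re_le_norm _).trans hk
  linarith [add_sum_erase univ (M k) (mem_univ k), hrow k]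

end Matrix

-- `sSup ∅ = 0`, so an empty spectrum does not give a negative abscissa.
theorem spectralAbscissa_lt_zero_iff {m : Type*} [Fintype m] [DecidableEq m] (M : Matrix m m ℝ) :
    spectralAbscissa M < 0 ↔
      (spectrum ℂ (M.map Complex.ofReal)).Nonempty ∧
        ∀ z ∈ spectrum ℂ (M.map Complex.ofReal), z.re < 0 := by
  rcases (spectrum ℂ (M.map Complex.ofReal)).eq_empty_or_nonempty with hempty | hne
  · simp [spectralAbscissa, hempty]
  · rw [spectralAbscissa, ((Matrix.finite_spectrum _).image _).csSup_lt_iff (hne.image _),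
      Set.forall_mem_image]
    exact ⟨fun h => ⟨hne, h⟩, And.right⟩

def finThreeProdEquiv (n : ℕ) : Fin 3 × Fin n ≃ (Fin 2 × Fin n) ⊕ Fin n :=
  (((finSumFinEquiv (m := 2) (n := 1)).symm.prodCongr (Equiv.refl _)).trans
    (Equiv.sumProdDistrib _ _ _)).trans (Equiv.sumCongr (Equiv.refl _) (Equiv.uniqueProd _ _))

theorem reindex_blockMat_three {n : ℕ} (A₁ A₂ A₃ A₄ A₅ A₆ : Matrix (Fin n) (Fin n) ℝ) :
    reindex (finThreeProdEquiv n) (finThreeProdEquiv n)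
        (blockMat ![![A₁, A₂, 0], ![A₃, A₄, 0], ![0, A₅, A₆]]) =
      fromBlocks (blockMat ![![A₁, A₂], ![A₃, A₄]]) 0 (of fun i q => ![0, A₅] q.1 i q.2) A₆ := by
  ext (⟨k, i⟩ | i) (⟨l, j⟩ | j)
  · fin_cases k <;> fin_cases l <;> rfl
  · fin_cases k <;> rfl
  · fin_cases l <;> rfl
  · rfl

theorem spectrum_map_blockMat_three {n : ℕ} (A₁ A₂ A₃ A₄ A₅ A₆ : Matrix (Fin n) (Fin n) ℝ) :
    spectrum ℂ ((blockMat ![![A₁, A₂, 0], ![A₃, A₄, 0], ![0, A₅, A₆]]).map Complex.ofReal) =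
      spectrum ℂ ((blockMat ![![A₁, A₂], ![A₃, A₄]]).map Complex.ofReal) ∪
        spectrum ℂ (A₆.map Complex.ofReal) := by
  rw [← spectrum_reindex (finThreeProdEquiv n), reindex_apply, submatrix_map, ← reindex_apply,
    reindex_blockMat_three, fromBlocks_map, Matrix.map_zero _ Complex.ofReal_zero,
    spectrum_fromBlocks_zero₁₂]

theorem healthy_state_locally_stable_general
    {n : ℕ}
    (N α β σ δ γ : Fin n → ℝ) (w : Fin n → Fin n → ℝ)
    (hN : ∀ i, 0 < N i) (hα : ∀ i, 0 < α i)
    (hγ : ∀ i, 0 < γ i)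
    (hwnn : ∀ i j, 0 ≤ w i j)
    (Φm : Matrix (Fin n) (Fin n) ℝ)
    (hΦ : ∀ i j, Φm i j = if i = j then 0 else (N j / N i) * w i j * γ j)
    (hbal : ∀ i, γ i = ∑ j ∈ Finset.univ.erase i, Φm i j)
    (U : Matrix (Fin 2 × Fin n) (Fin 2 × Fin n) ℝ)
    (hU : U = blockMat
      ![![-(Matrix.diagonal σ) - Matrix.diagonal γ + Φm, Matrix.diagonal β],
        ![Matrix.diagonal σ, -(Matrix.diagonal δ) - Matrix.diagonal γ + Φm]])
    (J : Matrix (Fin 3 × Fin n) (Fin 3 × Fin n) ℝ)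
    (hJ : J = blockMat
      ![![-(Matrix.diagonal σ) - Matrix.diagonal γ + Φm, Matrix.diagonal β, 0],
        ![Matrix.diagonal σ, -(Matrix.diagonal δ) - Matrix.diagonal γ + Φm, 0],
        ![0, Matrix.diagonal δ, -(Matrix.diagonal α) - Matrix.diagonal γ + Φm]])
    (hsU : spectralAbscissa U < 0) :
    spectralAbscissa J < 0 := by
  set V := -(Matrix.diagonal α) - Matrix.diagonal γ + Φm
  have hΦ_nonneg : ∀ i j, 0 ≤ Φm i j := fun i j => by
    rw [hΦ]
    split_ifs
    exacts [le_rfl, mul_nonneg (mul_nonneg (div_nonneg (hN j).le (hN i).le) (hwnn i j)) (hγ j).le]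
  have hΦ_rowSum : ∀ i, ∑ j, Φm i j = γ i := fun i => by
    rw [← add_sum_erase _ _ (mem_univ i), hbal i, hΦ, if_pos rfl, zero_add]
  have hV_offDiag : ∀ i j, i ≠ j → 0 ≤ V i j := fun i j hij => by
    simpa [V, diagonal_apply_ne _ hij] using hΦ_nonneg i j
  have hV_rowSum : ∀ i, ∑ j, V i j < 0 := fun i => by
    simp only [V, Matrix.add_apply, Matrix.sub_apply, Matrix.neg_apply, sum_add_distrib,
      sum_sub_distrib, sum_neg_distrib, diagonal_apply, sum_ite_eq, mem_univ, if_true, hΦ_rowSum]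
    linarith [hα i]
  rw [spectralAbscissa_lt_zero_iff] at hsU ⊢
  rw [hJ, spectrum_map_blockMat_three, ← hU]
  exact ⟨hsU.1.mono Set.subset_union_left, fun z hz =>
    hz.elim (hsU.2 z) (re_lt_of_mem_spectrum_of_rowSum_lt hV_offDiag hV_rowSum)⟩

/-- **Proposition (local exponential stability of the healthy state).**
If `s(U) < 0` for the upper `2n × 2n` block `U`, then the spectral abscissa of the full
Jacobian `J` of the `(e,x,r)`-dynamics at the healthy state is negative. -/
theorem healthy_state_locally_stable
    {n : ℕ} (hn : 1 ≤ n)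
    (N α β σ δ γ : Fin n → ℝ) (w : Fin n → Fin n → ℝ)
    (hN : ∀ i, 0 < N i) (hα : ∀ i, 0 < α i) (hβ : ∀ i, 0 < β i)
    (hσ : ∀ i, 0 < σ i) (hδ : ∀ i, 0 < δ i) (hγ : ∀ i, 0 < γ i)
    (hwdiag : ∀ i, w i i = 0) (hwnn : ∀ i j, 0 ≤ w i j)
    (hwsum : ∀ j, ∑ i ∈ Finset.univ.erase j, w i j = 1)
    (Φm : Matrix (Fin n) (Fin n) ℝ)
    (hΦ : ∀ i j, Φm i j = if i = j then 0 else (N j / N i) * w i j * γ j)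
    (hbal : ∀ i, γ i = ∑ j ∈ Finset.univ.erase i, Φm i j)
    (U : Matrix (Fin 2 × Fin n) (Fin 2 × Fin n) ℝ)
    (hU : U = blockMat
      ![![-(Matrix.diagonal σ) - Matrix.diagonal γ + Φm, Matrix.diagonal β],
        ![Matrix.diagonal σ, -(Matrix.diagonal δ) - Matrix.diagonal γ + Φm]])
    (J : Matrix (Fin 3 × Fin n) (Fin 3 × Fin n) ℝ)
    (hJ : J = blockMat
      ![![-(Matrix.diagonal σ) - Matrix.diagonal γ + Φm, Matrix.diagonal β, 0],
        ![Matrix.diagonal σ, -(Matrix.diagonal δ) - Matrix.diagonal γ + Φm, 0],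
        ![0, Matrix.diagonal δ, -(Matrix.diagonal α) - Matrix.diagonal γ + Φm]])
    (hsU : spectralAbscissa U < 0) :
    spectralAbscissa J < 0 :=
  healthy_state_locally_stable_general N α β σ δ γ w hN hα hγ hwnn Φm hΦ hbal U hU J hJ hsU
end

section
/- Consider the networked SEIRS model with travel flows, with all parameters α_i, β_i, σ_i, δ_i > 0. Suppose the directed graph on the n nodes with an edge from j to i whenever Φ_{ij} > 0 is strongly connected, and suppose x_i > 0 for at least one node i. Then the 4n×4n nonnegative matrix M = [[Φ, 0, 0, A],[B·diag(x_i), Φ, 0, 0],[0, Σ, Φ, 0],[0, 0, D, Φ]] is irreducible. -/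
open Finset Matrix

/-- A nonnegative square matrix `P` is irreducible if for every pair of indices `i ≠ j`
there is a finite chain `i = k_0, k_1, …, k_m = j` with `P (k_{l+1}) (k_l) > 0`. -/
def MatIrreducible {m : Type*} (P : Matrix m m ℝ) : Prop :=
  ∀ i j : m, i ≠ j → Relation.TransGen (fun a b => P b a > 0) i j
/-!
Each diagonal block of `M` is the strongly connected flow graph `Φ`, so every layer
`S, E, I, R` is strongly connected on its own. The four off-diagonal blocks close the
layers into the cycle `S → E → I → R → S`, and each of them has a positive entry
(`β_i x_i > 0` at a node with `x_i > 0`). Walking inside a layer to the tail of such an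
entry, crossing, and repeating around the cycle connects any two vertices.
-/

open Relation

open Fin.NatCast in
theorem Relation.reflTransGen_of_cyclic_layers {k : ℕ} [NeZero k] {ι : Type*}
    {r : Fin k × ι → Fin k × ι → Prop}
    (hlayer : ∀ l a b, ReflTransGen r (l, a) (l, b))
    (hstep : ∀ l, ∃ a b, r (l, a) (l + 1, b)) (p q : Fin k × ι) :
    ReflTransGen r p q := by
  have next (l : Fin k) (a b : ι) : ReflTransGen r (l, a) (l + 1, b) := by
    obtain ⟨a', b', h⟩ := hstep l
    exact ((hlayer l a a').tail h).trans (hlayer (l + 1) b' b)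
  have iterate (j : ℕ) : ∀ l a b, ReflTransGen r (l, a) (l + (j : Fin k), b) := by
    induction j with
    | zero => simpa using hlayer
    | succ j ih =>
      intro l a b
      simpa [add_assoc] using (ih l a a).trans (next (l + (j : Fin k)) a b)
  obtain ⟨l, a⟩ := p
  obtain ⟨l', b⟩ := q
  simpa using iterate (l' - l).val l a b

theorem matIrreducible_iff_reflTransGen {m : Type*} (P : Matrix m m ℝ) :
    MatIrreducible P ↔ ∀ i j, ReflTransGen (fun a b => P b a > 0) i j := by
  refine ⟨fun h i j => ?_, fun h i j hij => ?_⟩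
  · rcases eq_or_ne i j with rfl | hij
    · exact ReflTransGen.refl
    · exact (h i j hij).to_reflTransGen
  · exact (reflTransGen_iff_eq_or_transGen.1 (h i j)).resolve_left hij.symm

theorem matIrreducible_blockMat_of_cyclic {k n : ℕ} [NeZero k]
    (Bl : Fin k → Fin k → Matrix (Fin n) (Fin n) ℝ)
    (hdiag : ∀ l, MatIrreducible (Bl l l))
    (hstep : ∀ l, ∃ a b, 0 < Bl (l + 1) l b a) :
    MatIrreducible (blockMat Bl) := by
  rw [matIrreducible_iff_reflTransGen]
  refine reflTransGen_of_cyclic_layers (fun l a b => ?_) hstep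
  exact ReflTransGen.lift (fun i => (l, i)) (fun _ _ h => h) a b
    ((matIrreducible_iff_reflTransGen _).1 (hdiag l) a b)

theorem seirs_flow_matrix_irreducible_general
    {n : ℕ}
    (α β σ δ : Fin n → ℝ)
    (hα : ∀ i, 0 < α i) (hβ : ∀ i, 0 < β i)
    (hσ : ∀ i, 0 < σ i) (hδ : ∀ i, 0 < δ i)
    (Φm : Matrix (Fin n) (Fin n) ℝ)
    (hconn : ∀ a b : Fin n, a ≠ b → Relation.TransGen (fun u v => Φm v u > 0) a b)
    (x : Fin n → ℝ) (hxpos : ∃ i, 0 < x i)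
    (M : Matrix (Fin 4 × Fin n) (Fin 4 × Fin n) ℝ)
    (hM : M = blockMat
      ![![Φm, 0, 0, Matrix.diagonal α],
        ![Matrix.diagonal (fun i => β i * x i), Φm, 0, 0],
        ![0, Matrix.diagonal σ, Φm, 0],
        ![0, 0, Matrix.diagonal δ, Φm]]) :
    MatIrreducible M := by
  obtain ⟨i, hxi⟩ := hxpos
  have diagonal_pos {d : Fin n → ℝ} (hd : 0 < d i) : 0 < diagonal d i i := by
    rwa [diagonal_apply_eq]
  subst hM
  refine matIrreducible_blockMat_of_cyclic _ (fun l => ?_) (fun l => ⟨i, i, ?_⟩)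
  · fin_cases l <;> exact hconn
  · fin_cases l
    exacts [diagonal_pos (mul_pos (hβ i) hxi), diagonal_pos (hσ i), diagonal_pos (hδ i),
      diagonal_pos (hα i)]

/-- **Lemma (irreducibility of `M`).**
If the flow graph (edge from `j` to `i` whenever `Φ_{ij} > 0`) is strongly connected and
some node has a positive infected proportion, then the `4n × 4n` nonnegative matrix
`M = [[Φ,0,0,A],[B·diag(x),Φ,0,0],[0,Σ,Φ,0],[0,0,D,Φ]]` is irreducible. -/
theorem seirs_flow_matrix_irreducible
    {n : ℕ} (hn : 1 ≤ n)
    (N α β σ δ γ : Fin n → ℝ) (w : Fin n → Fin n → ℝ)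
    (hN : ∀ i, 0 < N i) (hα : ∀ i, 0 < α i) (hβ : ∀ i, 0 < β i)
    (hσ : ∀ i, 0 < σ i) (hδ : ∀ i, 0 < δ i) (hγ : ∀ i, 0 < γ i)
    (hwdiag : ∀ i, w i i = 0) (hwnn : ∀ i j, 0 ≤ w i j)
    (hwsum : ∀ j, ∑ i ∈ Finset.univ.erase j, w i j = 1)
    (Φm : Matrix (Fin n) (Fin n) ℝ)
    (hΦ : ∀ i j, Φm i j = if i = j then 0 else (N j / N i) * w i j * γ j)
    (hconn : ∀ a b : Fin n, a ≠ b → Relation.TransGen (fun u v => Φm v u > 0) a b)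
    (x : Fin n → ℝ) (hxnn : ∀ i, 0 ≤ x i) (hxpos : ∃ i, 0 < x i)
    (M : Matrix (Fin 4 × Fin n) (Fin 4 × Fin n) ℝ)
    (hM : M = blockMat
      ![![Φm, 0, 0, Matrix.diagonal α],
        ![Matrix.diagonal (fun i => β i * x i), Φm, 0, 0],
        ![0, Matrix.diagonal σ, Φm, 0],
        ![0, 0, Matrix.diagonal δ, Φm]]) :
    MatIrreducible M :=
  seirs_flow_matrix_irreducible_general α β σ δ hα hβ hσ hδ Φm hconn x hxpos M hM
end

section
/- Let Λ ∈ ℝ^{n×n} be a diagonal matrix with all diagonal entries strictly negative, let N ∈ ℝ^{n×n} be an irreducible nonnegative matrix, and set M = Λ + N. Then: s(M) < 0 if and only if ρ(−Λ^{−1}N) < 1; s(M) = 0 if and only if ρ(−Λ^{−1}N) = 1; and s(M) > 0 if and only if ρ(−Λ^{−1}N) > 1. -/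
/-!
Write `A = -Λ⁻¹N ≥ 0`. By Perron–Frobenius, `A` has a positive eigenvector `v` for the eigenvalue
`ρ = ρ(A)`, and then `Mv = (1 - ρ) Λ v`. Since every entry of `Λ` is negative, `Mv` is
componentwise a positive, zero, or negative multiple of `v` according to whether `ρ > 1`,
`ρ = 1` or `ρ < 1`. For the Metzler matrix `M`, Collatz–Wielandt bounds pin `s(M)` between
`min (Mv)ᵢ / vᵢ` and `max (Mv)ᵢ / vᵢ`: the upper bound holds for every Metzler matrix, the lower
one needs irreducibility, which makes `s(M)` a real eigenvalue of `M` with positive eigenvector.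
Both reduce to the nonnegative case after adding a multiple of the identity. Perron–Frobenius
itself rests on the lower bound `c v ≤ A v ⇒ c ≤ ρ(A)`, a consequence of Gelfand's formula.
-/

open Finset Matrix

/-- The spectral radius of a real square matrix: the maximum modulus of its complex
eigenvalues. -/
noncomputable def spectralRad {m : Type*} [Fintype m] [DecidableEq m]
    (M : Matrix m m ℝ) : ℝ :=
  sSup ((fun μ => ‖μ‖) '' spectrum ℂ (M.map Complex.ofReal))

open Filter Topology

theorem and_iff_of_trichotomy {α β : Type*} [LinearOrder α] [LinearOrder β] {a c : α} {b d : β}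
    (hlt : b < d → a < c) (heq : b = d → a = c) (hgt : d < b → c < a) :
    (a < c ↔ b < d) ∧ (a = c ↔ b = d) ∧ (a > c ↔ b > d) := by
  rcases lt_trichotomy b d with h | h | h
  · have := hlt h
    simp [h, this, this.ne, h.ne, lt_asymm h, lt_asymm this]
  · simp [h, heq h]
  · have := hgt h
    simp [h, this, this.ne', h.ne', lt_asymm h, lt_asymm this]

theorem Pi.exists_pos_smul_le {ι : Type*} [Finite ι] {z : ι → ℝ} (hz : ∀ i, 0 < z i)
    (y : ι → ℝ) : ∃ ε : ℝ, 0 < ε ∧ ε • y ≤ z := by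
  have hsmall : ∀ᶠ ε in 𝓝[>] (0 : ℝ), ∀ i, ε * y i < z i :=
    nhdsWithin_le_nhds <| eventually_all.2 fun i =>
      (continuous_id.mul continuous_const).continuousAt.eventually_lt continuousAt_const
        (by simpa using hz i)
  obtain ⟨ε, hεz, hε⟩ := (hsmall.and self_mem_nhdsWithin).exists
  exact ⟨ε, hε, fun i => (hεz i).le⟩

theorem spectrum.ofReal_le_spectralRadius_of_pow_le_norm_pow {A : Type*} [NormedRing A]
    [NormedAlgebra ℂ A] [CompleteSpace A] {a : A} {c : ℝ} (hc : 0 ≤ c)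
    (h : ∀ k : ℕ, c ^ k ≤ ‖a ^ k‖) : ENNReal.ofReal c ≤ spectralRadius ℂ a := by
  refine ge_of_tendsto (spectrum.pow_norm_pow_one_div_tendsto_nhds_spectralRadius a) ?_
  filter_upwards [eventually_ne_atTop 0] with k hk
  refine ENNReal.ofReal_le_ofReal ?_
  calc c = (c ^ k) ^ (1 / k : ℝ) := by rw [one_div, Real.pow_rpow_inv_natCast hc hk]
    _ ≤ ‖a ^ k‖ ^ (1 / k : ℝ) := by gcongr; exact h k

section Irreducible

variable {κ : Type*}

theorem MatIrreducible.reflTransGen {P : Matrix κ κ ℝ} (h : MatIrreducible P) (i j : κ) :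
    Relation.ReflTransGen (fun a b => 0 < P b a) i j := by
  rcases eq_or_ne i j with rfl | hij
  · exact .refl
  · exact (h i j hij).to_reflTransGen

/-- Diagonal steps of a chain can be dropped, so only the off-diagonal pattern matters. -/
theorem MatIrreducible.mono {P Q : Matrix κ κ ℝ} (h : MatIrreducible P)
    (hPQ : ∀ i j, i ≠ j → 0 < P i j → 0 < Q i j) : MatIrreducible Q := by
  intro i j
  have hQ : Relation.ReflTransGen (fun a b => 0 < Q b a) i j := by
    induction h.reflTransGen i j with
    | refl => exact .refl
    | @tail b c _ hbc ih =>
      rcases eq_or_ne b c with rfl | hne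
      · exact ih
      · exact ih.tail (hPQ c b hne.symm hbc)
  exact fun hij => (Relation.reflTransGen_iff_eq_or_transGen.1 hQ).resolve_left hij.symm

variable [DecidableEq κ] {M : Matrix κ κ ℝ}

theorem MatIrreducible.add_smul_one (h : MatIrreducible M) (β : ℝ) :
    MatIrreducible (M + β • 1) :=
  h.mono fun i j hij hpos => by simpa [one_apply_ne hij] using hpos

theorem MatIrreducible.diagonal_add (h : MatIrreducible M) (d : κ → ℝ) :
    MatIrreducible (diagonal d + M) :=
  h.mono fun i j hij hpos => by simpa [hij] using hpos

end Irreducible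

variable {ι : Type*} [Fintype ι]

section NonnegMulVec

variable {A : Matrix ι ι ℝ}

theorem Matrix.mulVec_mono_of_nonneg (hA : ∀ i j, 0 ≤ A i j) {u v : ι → ℝ} (huv : u ≤ v) :
    A *ᵥ u ≤ A *ᵥ v := fun i =>
  sum_le_sum fun j _ => mul_le_mul_of_nonneg_left (huv j) (hA i j)

theorem Matrix.mulVec_nonneg_of_nonneg (hA : ∀ i j, 0 ≤ A i j) {v : ι → ℝ} (hv : 0 ≤ v) :
    0 ≤ A *ᵥ v := by
  simpa using mulVec_mono_of_nonneg hA hv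

theorem Matrix.apply_mul_le_mulVec (hA : ∀ i j, 0 ≤ A i j) {v : ι → ℝ} (hv : 0 ≤ v) (i j : ι) :
    A i j * v j ≤ (A *ᵥ v) i :=
  single_le_sum (f := fun k => A i k * v k) (fun k _ => mul_nonneg (hA i k) (hv k)) (mem_univ j)

theorem Matrix.norm_smul_le_mulVec_norm (hA : ∀ i j, 0 ≤ A i j) {x : ι → ℂ} {μ : ℂ}
    (h : A.map Complex.ofReal *ᵥ x = μ • x) :
    ‖μ‖ • (fun i => ‖x i‖) ≤ A *ᵥ fun i => ‖x i‖ := fun i =>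
  calc ‖μ‖ * ‖x i‖ = ‖∑ j, (A i j : ℂ) * x j‖ := by
        rw [← norm_mul, ← smul_eq_mul, ← Pi.smul_apply, ← h]; rfl
    _ ≤ ∑ j, ‖(A i j : ℂ) * x j‖ := norm_sum_le _ _
    _ = (A *ᵥ fun i => ‖x i‖) i := by simp [mulVec, dotProduct, abs_of_nonneg (hA _ _)]

end NonnegMulVec

variable [DecidableEq ι]

section Spectrum

attribute [local instance] Matrix.linftyOpNormedRing Matrix.linftyOpNormedAlgebra

theorem Matrix.mem_spectrum_iff_exists_mulVec_eq_smul {K : Type*} [Field K] {A : Matrix ι ι K}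
    {μ : K} : μ ∈ spectrum K A ↔ ∃ x ≠ 0, A *ᵥ x = μ • x := by
  rw [← spectrum_toLin', ← Module.End.hasEigenvalue_iff_mem_spectrum]
  refine ⟨fun hμ => ?_, fun ⟨x, hx0, hx⟩ => ?_⟩
  · obtain ⟨x, hx⟩ := hμ.exists_hasEigenvector
    exact ⟨x, hx.2, hx.apply_eq_smul⟩
  · exact Module.End.hasEigenvalue_of_hasEigenvector ⟨Module.End.mem_eigenspace_iff.2 hx, hx0⟩

theorem ofReal_mem_spectrum_of_mulVec_eq_smul {A : Matrix ι ι ℝ} {v : ι → ℝ} {t : ℝ}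
    (hv : v ≠ 0) (h : A *ᵥ v = t • v) : (t : ℂ) ∈ spectrum ℂ (A.map Complex.ofReal) := by
  refine mem_spectrum_iff_exists_mulVec_eq_smul.2 ⟨Complex.ofReal ∘ v, ?_, funext fun i => ?_⟩
  · exact fun h0 => hv (funext fun i => by simpa using congrFun h0 i)
  · exact (Complex.ofRealHom.map_mulVec A v i).symm.trans (by simp [h])

theorem spectrum_map_ofReal_nonempty [Nonempty ι] (A : Matrix ι ι ℝ) :
    (spectrum ℂ (A.map Complex.ofReal)).Nonempty :=
  spectrum.nonempty _

theorem norm_le_spectralRad {A : Matrix ι ι ℝ} {μ : ℂ}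
    (hμ : μ ∈ spectrum ℂ (A.map Complex.ofReal)) : ‖μ‖ ≤ spectralRad A :=
  le_csSup ((spectrum.isCompact _).image continuous_norm).bddAbove ⟨μ, hμ, rfl⟩

theorem spectralRad_nonneg (A : Matrix ι ι ℝ) : 0 ≤ spectralRad A :=
  Real.sSup_nonneg <| by rintro _ ⟨μ, -, rfl⟩; exact norm_nonneg μ

theorem exists_mem_spectrum_norm_eq_spectralRad [Nonempty ι] (A : Matrix ι ι ℝ) :
    ∃ μ ∈ spectrum ℂ (A.map Complex.ofReal), ‖μ‖ = spectralRad A :=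
  ((spectrum.isCompact _).image continuous_norm).sSup_mem
    ((spectrum_map_ofReal_nonempty A).image _)

theorem spectralRadius_le_ofReal_spectralRad (A : Matrix ι ι ℝ) :
    spectralRadius ℂ (A.map Complex.ofReal) ≤ ENNReal.ofReal (spectralRad A) :=
  iSup₂_le fun μ hμ => by
    rw [← ENNReal.ofReal_coe_nnreal, coe_nnnorm]
    exact ENNReal.ofReal_le_ofReal (norm_le_spectralRad hμ)

theorem re_le_spectralAbscissa {A : Matrix ι ι ℝ} {μ : ℂ}
    (hμ : μ ∈ spectrum ℂ (A.map Complex.ofReal)) : μ.re ≤ spectralAbscissa A :=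
  le_csSup ((spectrum.isCompact _).image Complex.continuous_re).bddAbove ⟨μ, hμ, rfl⟩

theorem spectralAbscissa_le [Nonempty ι] {A : Matrix ι ι ℝ} {c : ℝ}
    (h : ∀ μ ∈ spectrum ℂ (A.map Complex.ofReal), μ.re ≤ c) : spectralAbscissa A ≤ c :=
  csSup_le ((spectrum_map_ofReal_nonempty A).image _) <| by rintro _ ⟨μ, hμ, rfl⟩; exact h μ hμ

theorem le_spectralAbscissa_of_mulVec_eq_smul {A : Matrix ι ι ℝ} {v : ι → ℝ} {t : ℝ}
    (hv : v ≠ 0) (h : A *ᵥ v = t • v) : t ≤ spectralAbscissa A := by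
  simpa using re_le_spectralAbscissa (ofReal_mem_spectrum_of_mulVec_eq_smul hv h)

theorem map_ofReal_add_smul_one (M : Matrix ι ι ℝ) (β : ℝ) :
    (M + β • 1).map Complex.ofReal = algebraMap ℂ _ (β : ℂ) + M.map Complex.ofReal := by
  ext i j
  rcases eq_or_ne i j with rfl | hij <;> simp [algebraMap_eq_diagonal, one_apply, *, add_comm]

theorem linfty_opNorm_map_ofReal (A : Matrix ι ι ℝ) : ‖A.map Complex.ofReal‖ = ‖A‖ := by
  simp [linfty_opNorm_def]

theorem Matrix.pow_smul_le_pow_mulVec {A : Matrix ι ι ℝ} (hA : ∀ i j, 0 ≤ A i j) {u : ι → ℝ}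
    {c : ℝ} (hc : 0 ≤ c) (h : c • u ≤ A *ᵥ u) (k : ℕ) : c ^ k • u ≤ A ^ k *ᵥ u := by
  induction k with
  | zero => simp
  | succ k ih =>
    calc c ^ (k + 1) • u = c ^ k • (c • u) := by rw [pow_succ, mul_smul]
      _ ≤ c ^ k • (A *ᵥ u) := smul_le_smul_of_nonneg_left h (pow_nonneg hc k)
      _ = A *ᵥ (c ^ k • u) := by rw [mulVec_smul]
      _ ≤ A *ᵥ (A ^ k *ᵥ u) := mulVec_mono_of_nonneg hA ih
      _ = A ^ (k + 1) *ᵥ u := by rw [mulVec_mulVec, pow_succ']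

theorem le_spectralRad_of_smul_le_mulVec {A : Matrix ι ι ℝ} (hA : ∀ i j, 0 ≤ A i j)
    {u : ι → ℝ} (hu : 0 ≤ u) (hu0 : u ≠ 0) {c : ℝ} (h : c • u ≤ A *ᵥ u) :
    c ≤ spectralRad A := by
  rcases lt_or_ge c 0 with hc | hc
  · exact hc.le.trans (spectralRad_nonneg A)
  have hpow : ∀ k : ℕ, c ^ k ≤ ‖A.map Complex.ofReal ^ k‖ := fun k => by
    rw [show A.map Complex.ofReal ^ k = (A ^ k).map Complex.ofReal from
      (A.map_pow Complex.ofRealHom k).symm, linfty_opNorm_map_ofReal]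
    refine le_of_mul_le_mul_right ?_ (norm_pos_iff.2 hu0)
    calc c ^ k * ‖u‖ = ‖c ^ k • u‖ := by rw [norm_smul, Real.norm_of_nonneg (by positivity)]
      _ ≤ ‖A ^ k *ᵥ u‖ := (pi_norm_le_iff_of_nonneg (norm_nonneg _)).2 fun i =>
          calc ‖(c ^ k • u) i‖ = (c ^ k • u) i :=
                Real.norm_of_nonneg (smul_nonneg (pow_nonneg hc k) hu i)
            _ ≤ (A ^ k *ᵥ u) i := pow_smul_le_pow_mulVec hA hc h k i
            _ ≤ ‖A ^ k *ᵥ u‖ := (le_abs_self _).trans (norm_le_pi_norm (A ^ k *ᵥ u) i)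
      _ ≤ ‖A ^ k‖ * ‖u‖ := linfty_opNorm_mulVec _ _
  have := (spectrum.ofReal_le_spectralRadius_of_pow_le_norm_pow hc hpow).trans
    (spectralRadius_le_ofReal_spectralRad A)
  exact (ENNReal.ofReal_le_ofReal_iff (spectralRad_nonneg A)).1 this

end Spectrum

section Perron

variable {A : Matrix ι ι ℝ}

theorem norm_le_of_mulVec_le_smul (hA : ∀ i j, 0 ≤ A i j) {v : ι → ℝ} (hv : ∀ i, 0 < v i)
    {c : ℝ} (hAv : A *ᵥ v ≤ c • v) {μ : ℂ} (hμ : μ ∈ spectrum ℂ (A.map Complex.ofReal)) :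
    ‖μ‖ ≤ c := by
  obtain ⟨x, hx0, hx⟩ := mem_spectrum_iff_exists_mulVec_eq_smul.1 hμ
  obtain ⟨k, hk⟩ := Function.ne_iff.1 hx0
  set y : ι → ℝ := fun i => ‖x i‖
  have : Nonempty ι := ⟨k⟩
  obtain ⟨i₀, hi₀⟩ := Finite.exists_max fun i => y i / v i
  set t := y i₀ / v i₀
  have hyt : y ≤ t • v := fun i => (div_le_iff₀ (hv i)).1 (hi₀ i)
  have ht : 0 < t := (div_pos (norm_pos_iff.2 hk) (hv k)).trans_le (hi₀ k)
  have hyi₀ : y i₀ = t * v i₀ := (div_mul_cancel₀ _ (hv i₀).ne').symm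
  refine le_of_mul_le_mul_right ?_ (hyi₀ ▸ mul_pos ht (hv i₀))
  calc ‖μ‖ * y i₀ ≤ (A *ᵥ y) i₀ := norm_smul_le_mulVec_norm hA hx i₀
    _ ≤ (A *ᵥ (t • v)) i₀ := mulVec_mono_of_nonneg hA hyt i₀
    _ = t * (A *ᵥ v) i₀ := by rw [mulVec_smul]; rfl
    _ ≤ t * (c * v i₀) := mul_le_mul_of_nonneg_left (hAv i₀) ht.le
    _ = c * y i₀ := by rw [hyi₀]; ring

theorem Matrix.le_one_add_mulVec (hA : ∀ i j, 0 ≤ A i j) {x : ι → ℝ} (hx : 0 ≤ x) :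
    x ≤ (1 + A) *ᵥ x := by
  rw [add_mulVec, one_mulVec]
  exact le_add_of_nonneg_right (mulVec_nonneg_of_nonneg hA hx)

theorem Matrix.monotone_one_add_pow_mulVec (hA : ∀ i j, 0 ≤ A i j) {y : ι → ℝ} (hy : 0 ≤ y) :
    Monotone fun m : ℕ => (1 + A) ^ m *ᵥ y := by
  have hnonneg : ∀ m : ℕ, 0 ≤ (1 + A) ^ m *ᵥ y := fun m => by
    induction m with
    | zero => simpa using hy
    | succ m ih =>
      rw [pow_succ', ← mulVec_mulVec]
      exact ih.trans (le_one_add_mulVec hA ih)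
  refine monotone_nat_of_le_succ fun m => ?_
  rw [pow_succ', ← mulVec_mulVec]
  exact le_one_add_mulVec hA (hnonneg m)

theorem Matrix.le_one_add_pow_mulVec (hA : ∀ i j, 0 ≤ A i j) {y : ι → ℝ} (hy : 0 ≤ y)
    (m : ℕ) : y ≤ (1 + A) ^ m *ᵥ y := by
  simpa using monotone_one_add_pow_mulVec hA hy m.zero_le

theorem Matrix.mulVec_one_add_pow_mulVec_comm (L : ℕ) (y : ι → ℝ) :
    A *ᵥ ((1 + A) ^ L *ᵥ y) = (1 + A) ^ L *ᵥ (A *ᵥ y) := by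
  rw [mulVec_mulVec, mulVec_mulVec,
    (((Commute.one_left A).add_left (Commute.refl A)).pow_left L).eq]

/-- Positivity spreads along the chains of `A`, one edge per power of `1 + A`. -/
theorem MatIrreducible.exists_one_add_pow_mulVec_pos (hirr : MatIrreducible A)
    (hA : ∀ i j, 0 ≤ A i j) {y : ι → ℝ} (hy : 0 ≤ y) (hy0 : y ≠ 0) :
    ∃ L, ∀ i, 0 < ((1 + A) ^ L *ᵥ y) i := by
  have hmono := monotone_one_add_pow_mulVec hA hy
  have hnonneg : ∀ m : ℕ, 0 ≤ (1 + A) ^ m *ᵥ y := fun m =>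
    hy.trans (le_one_add_pow_mulVec hA hy m)
  obtain ⟨i₀, hi₀⟩ : ∃ i, 0 < y i := by
    by_contra! h
    exact hy0 (le_antisymm h hy)
  have hreach : ∀ j, ∃ m : ℕ, 0 < ((1 + A) ^ m *ᵥ y) j := fun j => by
    induction hirr.reflTransGen i₀ j with
    | refl => exact ⟨0, by simpa using hi₀⟩
    | @tail a b _ hab ih =>
      obtain ⟨m, hm⟩ := ih
      refine ⟨m + 1, (mul_pos hab hm).trans_le ?_⟩
      calc A b a * ((1 + A) ^ m *ᵥ y) a ≤ (A *ᵥ ((1 + A) ^ m *ᵥ y)) b :=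
            apply_mul_le_mulVec hA (hnonneg m) b a
        _ ≤ ((1 + A) ^ (m + 1) *ᵥ y) b := by
            rw [pow_succ', ← mulVec_mulVec, add_mulVec, one_mulVec]
            exact le_add_of_nonneg_left (hnonneg m b)
  choose m hm using hreach
  exact ⟨univ.sup m, fun j => (hm j).trans_le (hmono (le_sup (mem_univ j)) j)⟩

/-- A nonzero excess `A y - ρ y ≥ 0`, spread out by a power of `1 + A`, would give
`(ρ + ε) w ≤ A w` for some `w ≥ 0`, contradicting the lower Collatz–Wielandt bound. -/
theorem MatIrreducible.mulVec_eq_of_smul_le_mulVec (hirr : MatIrreducible A)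
    (hA : ∀ i j, 0 ≤ A i j) {y : ι → ℝ} (hy : 0 ≤ y) (hy0 : y ≠ 0)
    (h : spectralRad A • y ≤ A *ᵥ y) : A *ᵥ y = spectralRad A • y := by
  set ρ := spectralRad A
  by_contra hne
  set z := A *ᵥ y - ρ • y
  obtain ⟨L, hL⟩ := hirr.exists_one_add_pow_mulVec_pos hA (sub_nonneg.2 h) (sub_ne_zero.2 hne)
  set w := (1 + A) ^ L *ᵥ y
  have hyw : y ≤ w := le_one_add_pow_mulVec hA hy L
  obtain ⟨ε, hε, hεw⟩ := Pi.exists_pos_smul_le hL w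
  have hw : (ρ + ε) • w ≤ A *ᵥ w :=
    calc (ρ + ε) • w = ρ • w + ε • w := add_smul _ _ _
      _ ≤ ρ • w + (1 + A) ^ L *ᵥ z := add_le_add_right hεw _
      _ = A *ᵥ w := by
        rw [mulVec_one_add_pow_mulVec_comm, mulVec_sub, mulVec_smul]
        abel
  have hw0 : w ≠ 0 := fun hw0 => hy0 (le_antisymm (hw0 ▸ hyw) hy)
  linarith [le_spectralRad_of_smul_le_mulVec hA (hy.trans hyw) hw0 hw]

theorem MatIrreducible.exists_pos_mulVec_eq_spectralRad [Nonempty ι] (hirr : MatIrreducible A)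
    (hA : ∀ i j, 0 ≤ A i j) : ∃ v : ι → ℝ, (∀ i, 0 < v i) ∧ A *ᵥ v = spectralRad A • v := by
  obtain ⟨μ, hμ, hμρ⟩ := exists_mem_spectrum_norm_eq_spectralRad A
  obtain ⟨x, hx0, hx⟩ := mem_spectrum_iff_exists_mulVec_eq_smul.1 hμ
  set y : ι → ℝ := fun i => ‖x i‖
  have hy : 0 ≤ y := fun i => norm_nonneg (x i)
  have hy0 : y ≠ 0 := fun h0 => hx0 (funext fun i => norm_eq_zero.1 (congrFun h0 i))
  have hAy := hirr.mulVec_eq_of_smul_le_mulVec hA hy hy0 (hμρ ▸ norm_smul_le_mulVec_norm hA hx)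
  obtain ⟨L, hL⟩ := hirr.exists_one_add_pow_mulVec_pos hA hy hy0
  exact ⟨_, hL, by rw [mulVec_one_add_pow_mulVec_comm, hAy, mulVec_smul]⟩

end Perron

section Metzler

variable {M : Matrix ι ι ℝ}

theorem Matrix.add_smul_one_nonneg (hM : ∀ i j, i ≠ j → 0 ≤ M i j) :
    ∀ i j, 0 ≤ (M + (∑ k, |M k k|) • 1) i j := by
  intro i j
  rcases eq_or_ne i j with rfl | hij
  · have : |M i i| ≤ ∑ k, |M k k| :=
      single_le_sum (f := fun k => |M k k|) (fun k _ => abs_nonneg _) (mem_univ i)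
    simp only [add_apply, smul_apply, one_apply_eq, smul_eq_mul, mul_one]
    linarith [neg_abs_le (M i i)]
  · simpa [one_apply_ne hij] using hM i j hij

theorem spectralAbscissa_le_of_mulVec_le_smul [Nonempty ι] (hM : ∀ i j, i ≠ j → 0 ≤ M i j)
    {v : ι → ℝ} (hv : ∀ i, 0 < v i) {c : ℝ} (hMv : M *ᵥ v ≤ c • v) :
    spectralAbscissa M ≤ c := by
  set β := ∑ k, |M k k|
  refine spectralAbscissa_le fun μ hμ => ?_
  have hshift : μ + β ∈ spectrum ℂ ((M + β • 1).map Complex.ofReal) := by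
    rwa [map_ofReal_add_smul_one, spectrum.add_mem_add_iff]
  have hPv : (M + β • 1) *ᵥ v ≤ (c + β) • v := by
    rw [add_mulVec, smul_mulVec, one_mulVec, add_smul]
    exact add_le_add_left hMv _
  have := norm_le_of_mulVec_le_smul (add_smul_one_nonneg hM) hv hPv hshift
  have hre : (μ + β).re ≤ ‖μ + β‖ := Complex.re_le_norm _
  simp only [Complex.add_re, Complex.ofReal_re] at hre
  linarith

theorem MatIrreducible.le_spectralAbscissa_of_smul_le_mulVec [Nonempty ι]
    (hirr : MatIrreducible M) (hM : ∀ i j, i ≠ j → 0 ≤ M i j) {v : ι → ℝ} (hv : 0 ≤ v)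
    (hv0 : v ≠ 0) {c : ℝ} (hMv : c • v ≤ M *ᵥ v) : c ≤ spectralAbscissa M := by
  set β := ∑ k, |M k k|
  have hP := add_smul_one_nonneg hM
  obtain ⟨w, hw, hPw⟩ := (hirr.add_smul_one β).exists_pos_mulVec_eq_spectralRad hP
  have hMw : M *ᵥ w = (spectralRad (M + β • 1) - β) • w := by
    rw [sub_smul, ← hPw, add_mulVec, smul_mulVec, one_mulVec, add_sub_cancel_right]
  have hPv : (c + β) • v ≤ (M + β • 1) *ᵥ v := by
    rw [add_mulVec, smul_mulVec, one_mulVec, add_smul]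
    exact add_le_add_left hMv _
  have hw0 : w ≠ 0 := fun h0 => (hw (Classical.arbitrary ι)).ne' (congrFun h0 _)
  linarith [le_spectralRad_of_smul_le_mulVec hP hv hv0 hPv,
    le_spectralAbscissa_of_mulVec_eq_smul hw0 hMw]

end Metzler

section NegativeDiagonal

variable {d : ι → ℝ} {N : Matrix ι ι ℝ}

theorem Matrix.inv_diagonal_of_ne_zero (hd : ∀ i, d i ≠ 0) : (diagonal d)⁻¹ = diagonal d⁻¹ := by
  refine inv_eq_left_inv ?_
  rw [diagonal_mul_diagonal, ← diagonal_one]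
  exact congrArg diagonal (funext fun i => inv_mul_cancel₀ (hd i))

theorem Matrix.neg_inv_diagonal_mul_apply (hd : ∀ i, d i ≠ 0) (i j : ι) :
    (-((diagonal d)⁻¹ * N)) i j = -(d i)⁻¹ * N i j := by
  simp [inv_diagonal_of_ne_zero hd, diagonal_mul]

theorem Matrix.neg_inv_diagonal_mul_nonneg (hd : ∀ i, d i < 0) (hN : ∀ i j, 0 ≤ N i j) :
    ∀ i j, 0 ≤ (-((diagonal d)⁻¹ * N)) i j := fun i j => by
  rw [neg_inv_diagonal_mul_apply fun i => (hd i).ne]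
  exact mul_nonneg (neg_nonneg.2 (inv_nonpos.2 (hd i).le)) (hN i j)

theorem MatIrreducible.neg_inv_diagonal_mul (hN : MatIrreducible N) (hd : ∀ i, d i < 0) :
    MatIrreducible (-((diagonal d)⁻¹ * N)) :=
  hN.mono fun i j _ hpos => by
    rw [neg_inv_diagonal_mul_apply fun i => (hd i).ne]
    exact mul_pos (neg_pos.2 (inv_lt_zero.2 (hd i))) hpos

theorem Matrix.diagonal_add_mulVec_eq_smul (hd : ∀ i, d i ≠ 0) {v : ι → ℝ} {t : ℝ}
    (hv : -((diagonal d)⁻¹ * N) *ᵥ v = t • v) :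
    (diagonal d + N) *ᵥ v = (1 - t) • (diagonal d *ᵥ v) := by
  have hN : N = -(diagonal d * -((diagonal d)⁻¹ * N)) := by
    rw [mul_neg, neg_neg, mul_nonsing_inv_cancel_left]
    simpa using prod_ne_zero_iff.2 fun i _ => hd i
  rw [add_mulVec, hN, neg_mulVec, ← mulVec_mulVec, hv, mulVec_smul, sub_smul, one_smul,
    sub_eq_add_neg]

end NegativeDiagonal

/-- **Proposition.** If `Λ` is a negative diagonal matrix and `N` is an irreducible
nonnegative matrix, then for `M = Λ + N`: `s(M) < 0 ↔ ρ(−Λ⁻¹N) < 1`,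
`s(M) = 0 ↔ ρ(−Λ⁻¹N) = 1`, and `s(M) > 0 ↔ ρ(−Λ⁻¹N) > 1`. -/
theorem spectral_abscissa_vs_spectral_radius
    {n : ℕ} (hn : 0 < n)
    (d : Fin n → ℝ) (hd : ∀ i, d i < 0)
    (Λ Nm M : Matrix (Fin n) (Fin n) ℝ)
    (hΛ : Λ = Matrix.diagonal d)
    (hNnn : ∀ i j, 0 ≤ Nm i j)
    (hNirr : MatIrreducible Nm)
    (hM : M = Λ + Nm) :
    (spectralAbscissa M < 0 ↔ spectralRad (-(Λ⁻¹ * Nm)) < 1) ∧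
    (spectralAbscissa M = 0 ↔ spectralRad (-(Λ⁻¹ * Nm)) = 1) ∧
    (spectralAbscissa M > 0 ↔ spectralRad (-(Λ⁻¹ * Nm)) > 1) := by
  subst hΛ hM
  have : Nonempty (Fin n) := ⟨⟨0, hn⟩⟩
  obtain ⟨v, hv, hAv⟩ := (hNirr.neg_inv_diagonal_mul hd).exists_pos_mulVec_eq_spectralRad
    (neg_inv_diagonal_mul_nonneg hd hNnn)
  set ρ := spectralRad (-((diagonal d)⁻¹ * Nm))
  have hMv := diagonal_add_mulVec_eq_smul (fun i => (hd i).ne) hAv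
  have hM : ∀ i j, i ≠ j → 0 ≤ (diagonal d + Nm) i j := fun i j hij => by
    simpa [hij] using hNnn i j
  obtain ⟨i₀, hi₀⟩ := Finite.exists_max d
  have hdv : diagonal d *ᵥ v ≤ d i₀ • v := fun i => by
    simpa [mulVec_diagonal] using mul_le_mul_of_nonneg_right (hi₀ i) (hv i).le
  have hle : ρ ≤ 1 → spectralAbscissa (diagonal d + Nm) ≤ (1 - ρ) * d i₀ := fun hρ =>
    spectralAbscissa_le_of_mulVec_le_smul hM hv <| by
      rw [hMv, ← smul_smul]; exact smul_le_smul_of_nonneg_left hdv (sub_nonneg.2 hρ)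
  have hge : 1 ≤ ρ → (1 - ρ) * d i₀ ≤ spectralAbscissa (diagonal d + Nm) := fun hρ =>
    (hNirr.diagonal_add d).le_spectralAbscissa_of_smul_le_mulVec hM (fun i => (hv i).le)
      (fun h0 => (hv i₀).ne' (congrFun h0 i₀)) <| by
      rw [hMv, ← smul_smul]; exact smul_le_smul_of_nonpos_left hdv (sub_nonpos.2 hρ)
  refine and_iff_of_trichotomy (fun hρ => ?_) (fun hρ => ?_) (fun hρ => ?_)
  · exact (hle hρ.le).trans_lt (mul_neg_of_pos_of_neg (sub_pos.2 hρ) (hd i₀))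
  · have hc : (1 - ρ) * d i₀ = 0 := by rw [hρ, sub_self, zero_mul]
    exact le_antisymm (hc ▸ hle hρ.le) (hc ▸ hge hρ.ge)
  · exact (mul_pos_of_neg_of_neg (sub_neg.2 hρ) (hd i₀)).trans_le (hge hρ.le)
end
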